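/- For every weighted digraph D on a finite vertex set V, mac(UG(D))/2 ≤ mac(D) ≤ (mac(UG(D)) + r⁺(D))/2. -/

import Mathlib

open scoped BigOperators Classical

noncomputable section

namespace PaperStmt

variable {V : Type*} [Fintype V]

/-- Total weight of a weighted digraph given by `w : V → V → ℝ`. -/
def totalWeight (w : V → V → ℝ) : ℝ := ∑ u, ∑ v, w u v

/-- Weight of the dicut `(X, Xᶜ)`. -/
def cutWeight (w : V → V → ℝ) (X : Finset V) : ℝ := ∑ x ∈ X, ∑ y ∈ Xᶜ, w x y

/-- Maximum weight of a directed cut. -/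
def mac (w : V → V → ℝ) : ℝ :=
  Finset.univ.sup' ⟨∅, Finset.mem_univ ∅⟩ (fun X : Finset V => cutWeight w X)

/-- `r(v) = w⁺(v) - w⁻(v)`. -/
def rv (w : V → V → ℝ) (v : V) : ℝ := (∑ u, w v u) - (∑ u, w u v)

/-- `r⁺(D) = ∑_{v : r(v) > 0} r(v)`. -/
def rPlus (w : V → V → ℝ) : ℝ :=
  ∑ v ∈ Finset.univ.filter (fun v => 0 < rv w v), rv w v

/-- Maximum weight of a cut in the underlying weighted graph `UG(D)`,
where the edge `{x,y}` has weight `w x y + w y x`. -/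
def macUG (w : V → V → ℝ) : ℝ :=
  Finset.univ.sup' ⟨∅, Finset.mem_univ ∅⟩
    (fun X : Finset V => ∑ x ∈ X, ∑ y ∈ Xᶜ, (w x y + w y x))

/-!
The cut `(X, Xᶜ)` of `UG(D)` weighs `w(X,Xᶜ) + w(Xᶜ,X)`, while
`w(X,Xᶜ) - w(Xᶜ,X) = ∑_{x ∈ X} r(x) ≤ r⁺(D)`; both bounds follow by comparing these two
dicuts with `mac(D)`.
-/

open Finset

lemma cutWeight_compl (w : V → V → ℝ) (X : Finset V) :
    cutWeight w Xᶜ = ∑ x ∈ X, ∑ y ∈ Xᶜ, w y x := by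
  rw [cutWeight, compl_compl, sum_comm]

lemma ugCut_eq_cutWeight_add_cutWeight_compl (w : V → V → ℝ) (X : Finset V) :
    ∑ x ∈ X, ∑ y ∈ Xᶜ, (w x y + w y x) = cutWeight w X + cutWeight w Xᶜ := by
  rw [cutWeight_compl, cutWeight, ← sum_add_distrib]
  exact sum_congr rfl fun x _ => sum_add_distrib

/-- Arcs inside `X` contribute equally to out- and in-weights, so only the arcs crossing the
cut survive in `∑_{x ∈ X} r(x)`. -/
lemma cutWeight_sub_cutWeight_compl (w : V → V → ℝ) (X : Finset V) :
    cutWeight w X - cutWeight w Xᶜ = ∑ x ∈ X, rv w x := by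
  have inside : ∑ x ∈ X, ∑ u ∈ X, w x u = ∑ x ∈ X, ∑ u ∈ X, w u x := sum_comm
  rw [cutWeight_compl, cutWeight]
  simp only [rv, ← sum_add_sum_compl X, sum_sub_distrib, sum_add_distrib, inside]
  ring

lemma sum_le_sum_filter_pos {ι : Type*} [Fintype ι] (f : ι → ℝ) (s : Finset ι) :
    ∑ x ∈ s, f x ≤ ∑ x ∈ univ.filter (fun x => 0 < f x), f x := by
  rw [sum_filter]
  calc ∑ x ∈ s, f x ≤ ∑ x ∈ s, if 0 < f x then f x else 0 :=
        sum_le_sum fun x _ => by split_ifs <;> linarith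
    _ ≤ ∑ x, if 0 < f x then f x else 0 :=
        sum_le_sum_of_subset_of_nonneg (subset_univ s) fun x _ _ => by split_ifs <;> linarith

lemma macUG_le_two_mul_mac (w : V → V → ℝ) : macUG w ≤ 2 * mac w := by
  refine sup'_le _ _ fun X _ => ?_
  rw [ugCut_eq_cutWeight_add_cutWeight_compl]
  have hX : cutWeight w X ≤ mac w := le_sup' _ (mem_univ X)
  have hXc : cutWeight w Xᶜ ≤ mac w := le_sup' _ (mem_univ Xᶜ)
  linarith

lemma two_mul_mac_le_macUG_add_rPlus (w : V → V → ℝ) : 2 * mac w ≤ macUG w + rPlus w := by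
  rw [← le_div_iff₀' two_pos]
  refine sup'_le _ _ fun X _ => ?_
  have hug : cutWeight w X + cutWeight w Xᶜ ≤ macUG w := by
    rw [← ugCut_eq_cutWeight_add_cutWeight_compl]
    exact le_sup' (fun X : Finset V => ∑ x ∈ X, ∑ y ∈ Xᶜ, (w x y + w y x)) (mem_univ X)
  have hr : cutWeight w X - cutWeight w Xᶜ ≤ rPlus w := by
    rw [cutWeight_sub_cutWeight_compl]
    exact sum_le_sum_filter_pos (rv w) X
  linarith

theorem macUG_bounds {V : Type*} [Fintype V]
    (w : V → V → ℝ) :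
    macUG w / 2 ≤ mac w ∧ mac w ≤ (macUG w + rPlus w) / 2 := by
  constructor
  · linarith [macUG_le_two_mul_mac w]
  · linarith [two_mul_mac_le_macUG_add_rPlus w]

end PaperStmt
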